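/- arXiv:2402.12564 — 3 statements merged into one kernel-verified Lean document; each statement's English description precedes it below -/
import Mathlib

section
/- Let $l \ge 3$, $r \ge 0$ be integers and let $\mathcal{A}$ be an abstract arrangement of $n$ pseudolines (each pair meeting in exactly one crossing). If $k \ge \left(\frac{4(l+r)}{l-1} n\right)^{1/(l-1)}$, then there exists a coloring of the pseudolines with $k$ colors such that no crossing of degree in $\{l, l+1, \dots, l+r\}$ is monochromatic. -/
open Finset
open scoped Classical

section LLL
variable {V α : Type} [Fintype V] [Fintype α]

/-- `A ⊆ (V → α)` is determined by the coordinates in `U`. -/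
def Det (U : Finset V) (A : Finset (V → α)) : Prop :=
  ∀ f g : V → α, (∀ v ∈ U, f v = g v) → f ∈ A → g ∈ A

lemma card_const_le (s : Finset V) (x₀ : V) (hx : x₀ ∉ s) (A : Finset (V → α))
    (hA : ∀ f ∈ A, ∀ v ∈ s, f v = f x₀) :
    A.card ≤ Fintype.card α ^ (Fintype.card V - s.card) := by
  classical
  have := Finset.card_le_card_of_injOn
    (f := fun f : V → α => fun v : ((univ \ s : Finset V) : Finset V) => f v.1)
    (s := A) (t := (univ : Finset (((univ \ s : Finset V) : Finset V) → α)))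
    (fun a _ => Finset.mem_univ _) ?_
  · calc A.card ≤ Fintype.card (((univ \ s : Finset V) : Finset V) → α) := by
          simpa using this
      _ = Fintype.card α ^ (Fintype.card V - s.card) := by
          rw [Fintype.card_fun, Fintype.card_coe,
            Finset.card_sdiff_of_subset (Finset.subset_univ s), Finset.card_univ]
  · intro f hf g hg hfg
    simp only [Finset.mem_coe] at hf hg
    funext v
    by_cases hv : v ∈ s
    · have hx₀ : x₀ ∈ univ \ s := Finset.mem_sdiff.mpr ⟨Finset.mem_univ _, hx⟩
      have h0 : f x₀ = g x₀ := congrFun hfg ⟨x₀, hx₀⟩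
      rw [hA f hf v hv, hA g hg v hv, h0]
    · have hv' : v ∈ univ \ s := Finset.mem_sdiff.mpr ⟨Finset.mem_univ _, hv⟩
      exact congrFun hfg ⟨v, hv'⟩

lemma indep_card (U W : Finset V) (hUW : Disjoint U W) (A B : Finset (V → α))
    (hA : Det U A) (hB : Det W B) :
    (A ∩ B).card * Fintype.card (V → α) = A.card * B.card := by
  classical
  have mem1 : ∀ f g : V → α, f ∈ A → (fun v => if v ∈ W then g v else f v) ∈ A := by
    intro f g hf
    exact hA f _ (fun v hv => by simp [Finset.disjoint_left.mp hUW hv]) hf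
  have mem2 : ∀ f g : V → α, g ∈ B → (fun v => if v ∈ W then g v else f v) ∈ B := by
    intro f g hg
    exact hB g _ (fun v hv => by simp [hv]) hg
  have key : ((A ∩ B) ×ˢ (univ : Finset (V → α))).card = (A ×ˢ B).card := by
    apply Finset.card_bij'
      (i := fun p _ => ((fun v => if v ∈ W then p.2 v else p.1 v),
        (fun v => if v ∈ W then p.1 v else p.2 v)))
      (j := fun p _ => ((fun v => if v ∈ W then p.2 v else p.1 v),
        (fun v => if v ∈ W then p.1 v else p.2 v)))
    case hi =>
      rintro ⟨f, g⟩ hfg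
      simp only [mem_product, mem_inter, mem_univ, and_true] at hfg
      exact Finset.mem_product.mpr ⟨mem1 f g hfg.1, mem2 g f hfg.2⟩
    case hj =>
      rintro ⟨f, g⟩ hfg
      simp only [mem_product] at hfg
      refine Finset.mem_product.mpr ⟨Finset.mem_inter.mpr ⟨mem1 f g hfg.1, mem2 f g hfg.2⟩,
        Finset.mem_univ _⟩
    case left_inv =>
      rintro ⟨f, g⟩ _
      refine Prod.ext ?_ ?_ <;> funext v <;> by_cases hv : v ∈ W <;> simp [hv]
    case right_inv =>
      rintro ⟨f, g⟩ _
      refine Prod.ext ?_ ?_ <;> funext v <;> by_cases hv : v ∈ W <;> simp [hv]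
  have h1 : ((A ∩ B) ×ˢ (univ : Finset (V → α))).card = (A ∩ B).card * Fintype.card (V → α) := by
    rw [Finset.card_product, Finset.card_univ]
  have h2 : (A ×ˢ B).card = A.card * B.card := Finset.card_product A B
  omega

/-- Symmetric Lovász Local Lemma in the variable setting, counting version. -/
theorem lll {ι : Type} [Fintype ι] [Nonempty α]
    (vbl : ι → Finset V) (Ev : ι → Finset (V → α)) (p d : ℝ)
    (hdet : ∀ i, Det (vbl i) (Ev i))
    (hP : ∀ i, ((Ev i).card : ℝ) ≤ p * Fintype.card (V → α))
    (hnb : ∀ i, ∀ N : Finset ι, (∀ j ∈ N, j ≠ i ∧ ¬ Disjoint (vbl i) (vbl j)) →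
      ((N.card : ℕ) : ℝ) ≤ d)
    (hp : 0 ≤ p) (hd : 1 ≤ d) (hpd : 4 * p * d ≤ 1) :
    ∃ f : V → α, ∀ i, f ∉ Ev i := by
  classical
  have hΩpos : (0:ℝ) < Fintype.card (V → α) := by
    have : 0 < Fintype.card (V → α) := Fintype.card_pos
    exact_mod_cast this
  have hp4 : p ≤ 1/4 := by nlinarith
  set T : Finset ι → Finset (V → α) :=
    fun S => univ.filter fun f => ∀ j ∈ S, f ∉ Ev j with hT
  have Tmem : ∀ S f, f ∈ T S ↔ ∀ j ∈ S, f ∉ Ev j := by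
    intro S f; simp [hT]
  have Tanti : ∀ {S S' : Finset ι}, S' ⊆ S → T S ⊆ T S' := by
    intro S S' hss f hf
    rw [Tmem] at *
    exact fun j hj => hf j (hss hj)
  have detT : ∀ S : Finset ι, Det (S.biUnion vbl) (T S) := by
    intro S f g hagree hf
    rw [Tmem] at *
    intro j hj hg
    exact hf j hj (hdet j g f
      (fun v hv => (hagree v (Finset.mem_biUnion.mpr ⟨j, hj, hv⟩)).symm) hg)
  have hindep : ∀ (i : ι) (S : Finset ι), (∀ j ∈ S, Disjoint (vbl i) (vbl j)) →
      ((Ev i ∩ T S).card : ℝ) ≤ p * (T S).card := by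
    intro i S hS
    have hdisj : Disjoint (vbl i) (S.biUnion vbl) :=
      (Finset.disjoint_biUnion_right _ _ _).mpr hS
    have heq := indep_card (vbl i) (S.biUnion vbl) hdisj (Ev i) (T S) (hdet i) (detT S)
    have heq' : ((Ev i ∩ T S).card : ℝ) * Fintype.card (V → α)
        = (Ev i).card * (T S).card := by exact_mod_cast heq
    have hEv := hP i
    have hTnn : (0:ℝ) ≤ (T S).card := Nat.cast_nonneg _
    nlinarith [heq', mul_le_mul_of_nonneg_right hEv hTnn]
  have claim : ∀ S : Finset ι,
      0 < (T S).card ∧ ∀ i ∉ S, ((Ev i ∩ T S).card : ℝ) ≤ 2 * p * (T S).card := by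
    intro S
    induction S using Finset.strongInduction with
    | _ S ih =>
      have posS : 0 < (T S).card := by
        rcases S.eq_empty_or_nonempty with rfl | ⟨j, hj⟩
        · have : T ∅ = univ := by
            ext f; simp [Tmem]
          rw [this, Finset.card_univ]; exact Fintype.card_pos
        · set S' := S.erase j with hS'
          have hss : S' ⊂ S := Finset.erase_ssubset hj
          obtain ⟨pos', bd'⟩ := ih S' hss
          have hjS' : j ∉ S' := Finset.notMem_erase _ _
          have hsub : T S' \ Ev j ⊆ T S := by
            intro f hf
            rw [Finset.mem_sdiff] at hf
            rw [Tmem] at *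
            intro j' hj'
            rcases eq_or_ne j' j with rfl | hne
            · exact hf.2
            · exact hf.1 j' (Finset.mem_erase.mpr ⟨hne, hj'⟩)
          have hcard1 : (T S').card - (T S' ∩ Ev j).card ≤ (T S).card := by
            have : T S' \ Ev j = T S' \ (T S' ∩ Ev j) := by
              ext f; simp only [Finset.mem_sdiff, Finset.mem_inter]; tauto
            have h2 := Finset.card_le_card hsub
            rw [this, Finset.card_sdiff_of_subset (Finset.inter_subset_left)] at h2
            omega
          have hbd := bd' j hjS'
          rw [Finset.inter_comm] at hbd
          have h3 : ((T S' ∩ Ev j).card : ℝ) ≤ 2 * p * (T S').card := hbd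
          have h4 : (T S' ∩ Ev j).card ≤ (T S').card :=
            Finset.card_le_card Finset.inter_subset_left
          have hpos' : (0:ℝ) < (T S').card := by exact_mod_cast pos'
          have : (0:ℝ) < ((T S).card : ℝ) := by
            have hc1 : ((T S').card : ℝ) - ((T S' ∩ Ev j).card : ℝ) ≤ ((T S).card : ℝ) := by
              have h5 : ((T S').card : ℝ) - ((T S' ∩ Ev j).card : ℝ)
                  ≤ (((T S').card - (T S' ∩ Ev j).card : ℕ) : ℝ) := by
                rw [Nat.cast_sub h4]
              calc ((T S').card : ℝ) - ((T S' ∩ Ev j).card : ℝ)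
                  ≤ (((T S').card - (T S' ∩ Ev j).card : ℕ) : ℝ) := h5
                _ ≤ ((T S).card : ℝ) := by exact_mod_cast hcard1
            nlinarith
          exact_mod_cast this
      refine ⟨posS, ?_⟩
      intro i hi
      set S₁ := S.filter (fun j => ¬ Disjoint (vbl i) (vbl j)) with hS₁
      set S₂ := S \ S₁ with hS₂
      have hS₂disj : ∀ j ∈ S₂, Disjoint (vbl i) (vbl j) := by
        intro j hj
        rw [hS₂, Finset.mem_sdiff, hS₁, Finset.mem_filter] at hj
        by_contra hcon
        exact hj.2 ⟨hj.1, hcon⟩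
      have hind2 := hindep i S₂ hS₂disj
      rcases Finset.eq_empty_or_nonempty S₁ with h1 | h1
      · have hSS : S₂ = S := by rw [hS₂, h1, Finset.sdiff_empty]
        rw [hSS] at hind2
        have : (0:ℝ) ≤ (T S).card := Nat.cast_nonneg _
        nlinarith
      · have hS₁sub : S₁ ⊆ S := Finset.filter_subset _ _
        have hss2 : S₂ ⊂ S := by
          obtain ⟨j, hj⟩ := h1
          refine Finset.ssubset_iff_of_subset (Finset.sdiff_subset) |>.mpr ?_
          exact ⟨j, hS₁sub hj, by simp [hS₂, hj]⟩
        obtain ⟨pos₂, bd₂⟩ := ih S₂ hss2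
        have hpos₂ : (0:ℝ) < (T S₂).card := by exact_mod_cast pos₂
        have hnotin : ∀ j ∈ S₁, j ∉ S₂ := by
          intro j hj
          simp [hS₂, hj, hS₁sub hj]
        have hcover : T S₂ ⊆ T S ∪ S₁.biUnion (fun j => Ev j ∩ T S₂) := by
          intro f hf
          by_cases hf2 : ∀ j ∈ S₁, f ∉ Ev j
          · apply Finset.mem_union_left
            rw [Tmem] at *
            intro j hj
            by_cases hj1 : j ∈ S₁
            · exact hf2 j hj1
            · exact hf j (by simp [hS₂, hj, hj1])
          · push_neg at hf2
            obtain ⟨j, hj, hfj⟩ := hf2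
            exact Finset.mem_union_right _
              (Finset.mem_biUnion.mpr ⟨j, hj, Finset.mem_inter.mpr ⟨hfj, hf⟩⟩)
        have hcardcover : ((T S₂).card : ℝ)
            ≤ ((T S).card : ℝ) + ∑ j ∈ S₁, ((Ev j ∩ T S₂).card : ℝ) := by
          have h1' := Finset.card_le_card hcover
          have h2' := Finset.card_union_le (T S) (S₁.biUnion (fun j => Ev j ∩ T S₂))
          have h3' := Finset.card_biUnion_le
            (s := S₁) (t := fun j => Ev j ∩ T S₂)
          have h4' : (T S₂).card ≤ (T S).card + ∑ j ∈ S₁, (Ev j ∩ T S₂).card := by omega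
          exact_mod_cast h4'
        have hsum : ∑ j ∈ S₁, ((Ev j ∩ T S₂).card : ℝ)
            ≤ (S₁.card : ℝ) * (2*p*(T S₂).card) := by
          calc ∑ j ∈ S₁, ((Ev j ∩ T S₂).card : ℝ)
              ≤ ∑ _j ∈ S₁, (2*p*(T S₂).card) :=
                Finset.sum_le_sum (fun j hj => bd₂ j (hnotin j hj))
            _ = (S₁.card : ℝ) * (2*p*(T S₂).card) := by
                rw [Finset.sum_const, nsmul_eq_mul]
        have hS₁d : (S₁.card : ℝ) ≤ d := by
          refine hnb i S₁ ?_
          intro j hj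
          rw [hS₁, Finset.mem_filter] at hj
          exact ⟨fun h => hi (h ▸ hj.1), hj.2⟩
        have hhalf : ((T S₂).card : ℝ) ≤ 2 * (T S).card := by
          have hchain : ((T S₂).card : ℝ)
              ≤ ((T S).card : ℝ) + d * (2*p*(T S₂).card) := by
            have hnn : (0:ℝ) ≤ 2*p*(T S₂).card := by positivity
            nlinarith
          nlinarith
        have hmono : ((Ev i ∩ T S).card : ℝ) ≤ ((Ev i ∩ T S₂).card : ℝ) := by
          have : Ev i ∩ T S ⊆ Ev i ∩ T S₂ :=
            Finset.inter_subset_inter (le_refl _) (Tanti Finset.sdiff_subset)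
          exact_mod_cast Finset.card_le_card this
        nlinarith
  obtain ⟨pos, -⟩ := claim univ
  obtain ⟨f, hf⟩ := Finset.card_pos.mp pos
  exact ⟨f, fun i => (Tmem univ f).mp hf i (Finset.mem_univ i)⟩

end LLL

set_option maxHeartbeats 1600000 in
/-- If `k ≥ (4(l+r)/(l-1) · n)^(1/(l-1))`, then the `n` pseudolines of an arrangement can be
colored with `k` colors so that no crossing of degree in `{l, …, l+r}` is monochromatic. -/
theorem stmt_11 (L C : Type) [Fintype L] [Fintype C] (Inc : C → L → Prop)
    (n l r k : ℕ) (hn : Fintype.card L = n) (hl : 3 ≤ l)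
    (hpair : ∀ l₁ l₂ : L, l₁ ≠ l₂ → ∃! c : C, Inc c l₁ ∧ Inc c l₂)
    (hk : ((4 * ((l : ℝ) + r)) / ((l : ℝ) - 1) * n) ^ ((1 : ℝ) / ((l : ℝ) - 1)) ≤ k) :
    ∃ col : L → Fin k, ∀ c : C,
      (Finset.univ.filter fun x => Inc c x).card ∈ Finset.Icc l (l + r) →
      ∃ l₁ l₂, Inc c l₁ ∧ Inc c l₂ ∧ col l₁ ≠ col l₂ := by
  classical
  rcases Nat.eq_zero_or_pos n with hn0 | hnpos
  · -- no lines at all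
    subst hn0
    haveI : IsEmpty L := Fintype.card_eq_zero_iff.mp hn
    refine ⟨fun x => (IsEmpty.false x).elim, ?_⟩
    intro c hc
    exfalso
    have h0 : (Finset.univ.filter fun x => Inc c x).card = 0 := by
      simp [Finset.card_eq_zero, Finset.eq_empty_iff_forall_notMem]
    rw [h0, Finset.mem_Icc] at hc
    omega
  -- now n ≥ 1
  have hl1 : (1:ℝ) < (l:ℝ) := by
    have : (3:ℝ) ≤ (l:ℝ) := by exact_mod_cast hl
    linarith
  have hlpos : (0:ℝ) < (l:ℝ) - 1 := by linarith
  have hn1 : (1:ℝ) ≤ (n:ℝ) := by exact_mod_cast hnpos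
  set base : ℝ := 4 * ((l:ℝ) + r) / ((l:ℝ) - 1) * n with hbase
  have hbase0 : 0 ≤ base := by positivity
  have hbase4 : 4 ≤ base := by
    rw [hbase]
    have hrnn : (0:ℝ) ≤ (r:ℝ) := Nat.cast_nonneg _
    have h1 : (4:ℝ) ≤ 4 * ((l:ℝ) + r) / ((l:ℝ) - 1) := by
      rw [le_div_iff₀ hlpos]
      nlinarith
    nlinarith
  -- k ^ (l-1) ≥ base
  have hkpow : base ≤ (k:ℝ) ^ (l - 1) := by
    have hlne : ((l:ℝ) - 1) ≠ 0 := ne_of_gt hlpos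
    have h2 : (base ^ ((1:ℝ)/((l:ℝ)-1))) ^ ((l:ℝ)-1) ≤ (k:ℝ) ^ ((l:ℝ)-1) :=
      Real.rpow_le_rpow (Real.rpow_nonneg hbase0 _) hk (le_of_lt hlpos)
    rw [← Real.rpow_mul hbase0, one_div_mul_cancel hlne, Real.rpow_one] at h2
    have hcast : ((l:ℝ) - 1) = ((l - 1 : ℕ) : ℝ) := by
      have : 1 ≤ l := by omega
      push_cast [Nat.cast_sub this]
      ring
    rw [hcast, Real.rpow_natCast] at h2
    exact h2
  have hkpos : 0 < k := by
    by_contra hk0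
    push_neg at hk0
    interval_cases k
    have : ((0:ℕ):ℝ) ^ (l - 1) = 0 := by
      rw [Nat.cast_zero]
      exact zero_pow (by omega)
    rw [this] at hkpow
    linarith
  haveI : Nonempty (Fin k) := ⟨⟨0, hkpos⟩⟩
  -- set up the LLL data
  set ι := {c : C // (Finset.univ.filter fun x => Inc c x).card ∈ Finset.Icc l (l + r)} with hι
  set vbl : ι → Finset L := fun i => Finset.univ.filter fun x => Inc i.1 x with hvbl
  set Ev : ι → Finset (L → Fin k) :=
    fun i => Finset.univ.filter fun f => ∀ x ∈ vbl i, ∀ y ∈ vbl i, f x = f y with hEv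
  set p : ℝ := ((k:ℝ) ^ (l - 1))⁻¹ with hpdef
  set d : ℝ := ((l:ℝ) + r) * n / ((l:ℝ) - 1) with hddef
  have hkRpos : (0:ℝ) < (k:ℝ) ^ (l - 1) := by positivity
  have hvmem : ∀ (i : ι) (x : L), x ∈ vbl i ↔ Inc i.1 x := by
    intro i x; simp [hvbl]
  have hvcard : ∀ i : ι, l ≤ (vbl i).card ∧ (vbl i).card ≤ l + r := by
    intro i
    have := i.2
    rw [Finset.mem_Icc] at this
    exact this
  have hvn : ∀ i : ι, (vbl i).card ≤ n := by
    intro i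
    calc (vbl i).card ≤ Finset.univ.card := Finset.card_le_univ _
      _ = n := by rw [Finset.card_univ, hn]
  have hdet : ∀ i, Det (vbl i) (Ev i) := by
    intro i f g hagree hf
    rw [hEv, Finset.mem_filter] at hf ⊢
    refine ⟨Finset.mem_univ _, ?_⟩
    intro x hx y hy
    rw [← hagree x hx, ← hagree y hy]
    exact hf.2 x hx y hy
  have hP : ∀ i, ((Ev i).card : ℝ) ≤ p * Fintype.card (L → Fin k) := by
    intro i
    obtain ⟨hml, hmu⟩ := hvcard i
    have hle : l - 1 ≤ (vbl i).card := by omega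
    obtain ⟨s, hs_sub, hs_card⟩ := Finset.exists_subset_card_eq hle
    have hne : (vbl i \ s).Nonempty := by
      rw [← Finset.card_pos, Finset.card_sdiff_of_subset hs_sub, hs_card]
      omega
    obtain ⟨x₀, hx₀⟩ := hne
    rw [Finset.mem_sdiff] at hx₀
    have hb := card_const_le s x₀ hx₀.2 (Ev i) ?_
    · have hln : l - 1 ≤ n := le_trans hle (hvn i)
      have hb' : ((Ev i).card : ℝ) ≤ (k:ℝ) ^ (n - (l - 1)) := by
        have : (Ev i).card ≤ k ^ (n - (l-1)) := by
          rw [Fintype.card_fin, hn, hs_card] at hb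
          exact hb
        exact_mod_cast this
      have hcf : (Fintype.card (L → Fin k) : ℝ) = (k:ℝ) ^ n := by
        rw [Fintype.card_fun, Fintype.card_fin, hn]
        push_cast
        ring
      rw [hcf, hpdef]
      have hkey : (k:ℝ) ^ (n - (l-1)) * (k:ℝ) ^ (l-1) = (k:ℝ) ^ n := by
        rw [← pow_add, Nat.sub_add_cancel hln]
      calc ((Ev i).card : ℝ) ≤ (k:ℝ) ^ (n - (l - 1)) := hb'
        _ = ((k:ℝ) ^ (l-1))⁻¹ * (k:ℝ) ^ n := by
            field_simp
            linarith [hkey]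
    · intro f hf v hv
      rw [hEv, Finset.mem_filter] at hf
      exact hf.2 v (hs_sub hv) x₀ hx₀.1
  have hnb : ∀ i, ∀ Nbr : Finset ι, (∀ j ∈ Nbr, j ≠ i ∧ ¬ Disjoint (vbl i) (vbl j)) →
      ((Nbr.card : ℕ) : ℝ) ≤ d := by
    intro i Nbr hNbr
    set F : L → Finset ι := fun x => (Finset.univ : Finset ι).filter fun j => x ∈ vbl j with hF
    have hsub : Nbr ⊆ (vbl i).biUnion F := by
      intro j hj
      obtain ⟨x, hx1, hx2⟩ := Finset.not_disjoint_iff.mp (hNbr j hj).2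
      exact Finset.mem_biUnion.mpr ⟨x, hx1, Finset.mem_filter.mpr ⟨Finset.mem_univ _, hx2⟩⟩
    have hFx : ∀ x : L, (l-1) * (F x).card ≤ n := by
      intro x
      have hdisjE : ∀ j ∈ F x, ∀ j' ∈ F x, j ≠ j' →
          Disjoint ((vbl j).erase x) ((vbl j').erase x) := by
        intro j hj j' hj' hne
        rw [Finset.disjoint_left]
        intro y hy hy'
        rw [Finset.mem_erase] at hy hy'
        have hxy : x ≠ y := fun h => hy.1 h.symm
        obtain ⟨c, -, huniq⟩ := hpair x y hxy
        have hjx : Inc j.1 x := (hvmem j x).mp (Finset.mem_filter.mp hj).2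
        have hjy : Inc j.1 y := (hvmem j y).mp hy.2
        have hj'x : Inc j'.1 x := (hvmem j' x).mp (Finset.mem_filter.mp hj').2
        have hj'y : Inc j'.1 y := (hvmem j' y).mp hy'.2
        have e1 : j.1 = c := huniq j.1 ⟨hjx, hjy⟩
        have e2 : j'.1 = c := huniq j'.1 ⟨hj'x, hj'y⟩
        exact hne (Subtype.ext (e1.trans e2.symm))
      have hsum : ∑ j ∈ F x, ((vbl j).erase x).card ≤ n := by
        rw [← Finset.card_biUnion hdisjE]
        calc ((F x).biUnion fun j => (vbl j).erase x).card
            ≤ (Finset.univ : Finset L).card := Finset.card_le_univ _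
          _ = n := by rw [Finset.card_univ, hn]
      have hterm : ∀ j ∈ F x, l - 1 ≤ ((vbl j).erase x).card := by
        intro j hj
        rw [Finset.card_erase_of_mem (Finset.mem_filter.mp hj).2]
        have := (hvcard j).1
        omega
      calc (l-1) * (F x).card = ∑ _j ∈ F x, (l-1) := by
            rw [Finset.sum_const, smul_eq_mul, mul_comm]
        _ ≤ ∑ j ∈ F x, ((vbl j).erase x).card := Finset.sum_le_sum hterm
        _ ≤ n := hsum
    have hNbr : (l-1) * Nbr.card ≤ (l+r) * n := by
      calc (l-1) * Nbr.card
          ≤ (l-1) * ((vbl i).biUnion F).card :=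
            Nat.mul_le_mul_left _ (Finset.card_le_card hsub)
        _ ≤ (l-1) * ∑ x ∈ vbl i, (F x).card :=
            Nat.mul_le_mul_left _ Finset.card_biUnion_le
        _ = ∑ x ∈ vbl i, (l-1) * (F x).card := by rw [Finset.mul_sum]
        _ ≤ ∑ _x ∈ vbl i, n := Finset.sum_le_sum (fun x _ => hFx x)
        _ = (vbl i).card * n := by rw [Finset.sum_const, smul_eq_mul]
        _ ≤ (l+r) * n := Nat.mul_le_mul_right _ (hvcard i).2
    rw [hddef, le_div_iff₀ hlpos]
    have hcast : ((l:ℝ) - 1) = ((l - 1 : ℕ) : ℝ) := by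
      have h1 : 1 ≤ l := by omega
      push_cast [Nat.cast_sub h1]
      ring
    rw [hcast]
    have : ((Nbr.card : ℕ) : ℝ) * ((l - 1 : ℕ) : ℝ) ≤ (((l+r) * n : ℕ) : ℝ) := by
      rw [← Nat.cast_mul]
      exact_mod_cast Nat.le_of_eq (mul_comm _ _) |>.trans hNbr
    calc ((Nbr.card : ℕ) : ℝ) * ((l - 1 : ℕ) : ℝ) ≤ (((l+r) * n : ℕ) : ℝ) := this
      _ = ((l:ℝ) + r) * n := by push_cast; ring
  have hp : 0 ≤ p := by rw [hpdef]; positivity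
  have hd : 1 ≤ d := by
    rw [hddef, le_div_iff₀ hlpos]
    have hrnn : (0:ℝ) ≤ (r:ℝ) := Nat.cast_nonneg _
    nlinarith
  have hpd : 4 * p * d ≤ 1 := by
    have h4d : 4 * d = base := by
      rw [hddef, hbase]
      field_simp
    have h1 : 4 * d ≤ (k:ℝ) ^ (l-1) := by rw [h4d]; exact hkpow
    rw [hpdef]
    calc 4 * ((k:ℝ) ^ (l-1))⁻¹ * d = (4 * d) / ((k:ℝ) ^ (l-1)) := by ring
      _ ≤ 1 := by rw [div_le_one hkRpos]; exact h1
  obtain ⟨f, hf⟩ := lll vbl Ev p d hdet hP hnb hp hd hpd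
  refine ⟨f, ?_⟩
  intro c hc
  have hfi := hf ⟨c, hc⟩
  rw [hEv, Finset.mem_filter] at hfi
  push_neg at hfi
  obtain ⟨x, hx, y, hy, hxy⟩ := hfi (Finset.mem_univ _)
  exact ⟨x, y, (hvmem _ x).mp hx, (hvmem _ y).mp hy, hxy⟩
end

section
/- For every $r \ge 1$ there exists an abstract pseudoline arrangement $\mathcal{A}$ on $3r$ pseudolines with $\chi_{pl}(\mathcal{A}) = 2 \cdot \chi(G_o(\mathcal{A}))$. Concretely: partition $3r$ pseudolines into $r$ strips of 3; within each strip the 3 pseudolines meet in one common crossing of degree 3, and any two pseudolines from different strips meet in an ordinary point. Then $G_o(\mathcal{A}) = K_{3,\dots,3}$ (complete $r$-partite) has chromatic number $r$, while a pseudoline coloring requires $2r$ colors (each degree-3 strip crossing needs two colors within its strip, and strips pairwise conflict). -/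
open Finset
open scoped Classical

/-- The number of pseudolines through a crossing. -/
noncomputable def Deg (L C : Type) [Fintype L] (Inc : C → L → Prop) (c : C) : ℕ :=
  (Finset.univ.filter fun x => Inc c x).card

/-!
The construction works for any partition of the pseudolines into strips of at least three.
A pseudoline colouring uses two colours on every strip, since the strip's crossing has degree at
least 3, and never repeats a colour across strips, since those crossings are ordinary; so it needs
twice as many colours as there are strips, and colouring by the strip and by "is the strip's chosen
representative" achieves this. The ordinary graph is complete multipartite on the strips: colour
by strip, and one representative per strip gives a clique.
-/

section Coloring

variable {C L K K' : Type} (Inc : C → L → Prop)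

def IsPseudolineColoring (col : L → K) : Prop :=
  ∀ c : C, ∃ l₁ l₂, Inc c l₁ ∧ Inc c l₂ ∧ col l₁ ≠ col l₂

def IsOrdinaryPair [Fintype L] (l₁ l₂ : L) : Prop :=
  l₁ ≠ l₂ ∧ ∃ c : C, Inc c l₁ ∧ Inc c l₂ ∧ Deg L C Inc c = 2

variable {Inc}

lemma IsPseudolineColoring.comp {col : L → K} (hcol : IsPseudolineColoring Inc col)
    {f : K → K'} (hf : Function.Injective f) : IsPseudolineColoring Inc (f ∘ col) := by
  intro c
  obtain ⟨l₁, l₂, h₁, h₂, hne⟩ := hcol c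
  exact ⟨l₁, l₂, h₁, h₂, hf.ne hne⟩

end Coloring

namespace StripArrangement

variable {L S : Type} (σ : L → S)

def interStripGraph : SimpleGraph L := (⊤ : SimpleGraph S).comap σ

@[simp]
lemma interStripGraph_adj {l₁ l₂ : L} : (interStripGraph σ).Adj l₁ l₂ ↔ σ l₁ ≠ σ l₂ := by
  simp [interStripGraph]

/-- Each strip `σ ⁻¹' {s}` meets in the single crossing `inl s`; two pseudolines of different
strips meet in the ordinary crossing given by their edge of the complete multipartite graph. -/
abbrev Crossing := S ⊕ (interStripGraph σ).edgeSet

def Inc : Crossing σ → L → Prop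
  | .inl s, l => σ l = s
  | .inr e, l => l ∈ (e : Sym2 L)

variable {σ}

lemma eq_inr_of_inc_of_inc {l₁ l₂ : L} (h : σ l₁ ≠ σ l₂) {c : Crossing σ}
    (h₁ : Inc σ c l₁) (h₂ : Inc σ c l₂) : c = .inr ⟨s(l₁, l₂), by simpa using h⟩ := by
  rcases c with s | e
  · exact absurd (h₁.trans h₂.symm) h
  · exact congrArg Sum.inr (Subtype.ext ((Sym2.mem_and_mem_iff (ne_of_apply_ne σ h)).1 ⟨h₁, h₂⟩))

lemma ne_of_inc_inr {e : (interStripGraph σ).edgeSet} {l₁ l₂ : L} (h : l₁ ≠ l₂)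
    (h₁ : Inc σ (.inr e) l₁) (h₂ : Inc σ (.inr e) l₂) : σ l₁ ≠ σ l₂ := by
  obtain ⟨e, he⟩ := e
  have he' : e = s(l₁, l₂) := (Sym2.mem_and_mem_iff h).1 ⟨h₁, h₂⟩
  subst he'
  simpa using he

lemma existsUnique_inc {l₁ l₂ : L} (h : l₁ ≠ l₂) : ∃! c : Crossing σ, Inc σ c l₁ ∧ Inc σ c l₂ := by
  by_cases hs : σ l₁ = σ l₂
  · refine ⟨.inl (σ l₁), ⟨rfl, hs.symm⟩, ?_⟩
    rintro (s | e) ⟨h₁, h₂⟩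
    · exact congrArg Sum.inl h₁.symm
    · exact absurd hs (ne_of_inc_inr h h₁ h₂)
  · exact ⟨_, ⟨Sym2.mem_mk_left _ _, Sym2.mem_mk_right _ _⟩,
      fun c ⟨h₁, h₂⟩ => eq_inr_of_inc_of_inc hs h₁ h₂⟩

lemma color_ne_of_strip_ne {K : Type} {col : L → K}
    (hcol : IsPseudolineColoring (Inc σ) col) {l₁ l₂ : L} (h : σ l₁ ≠ σ l₂) :
    col l₁ ≠ col l₂ := by
  obtain ⟨a, b, ha, hb, hab⟩ := hcol (.inr ⟨s(l₁, l₂), by simpa using h⟩)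
  intro heq
  simp only [Inc, Sym2.mem_iff] at ha hb
  rcases ha with rfl | rfl <;> rcases hb with rfl | rfl <;> simp_all

section

variable [Fintype S] {K : Type} [Fintype K]

lemma two_mul_card_le_of_isPseudolineColoring {col : L → K}
    (hcol : IsPseudolineColoring (Inc σ) col) : 2 * Fintype.card S ≤ Fintype.card K := by
  -- two differently coloured pseudolines of every strip give `2 * |S|` distinct colours
  choose l₁ l₂ h₁ h₂ hne using fun s => hcol (.inl s)
  let pick : S × Bool → L := fun p => if p.2 then l₁ p.1 else l₂ p.1
  have hpick : ∀ p, σ (pick p) = p.1 := fun ⟨s, b⟩ => by cases b; exacts [h₂ s, h₁ s]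
  have hinj : Function.Injective (col ∘ pick) := by
    rintro ⟨s, b⟩ ⟨t, b'⟩ h
    by_cases hst : s = t
    · subst hst
      cases b <;> cases b'
      exacts [rfl, absurd h.symm (hne s), absurd h (hne s), rfl]
    · exact absurd h (color_ne_of_strip_ne hcol (by simpa [hpick] using hst))
  simpa [mul_comm] using Fintype.card_le_of_injective _ hinj

end

variable (σ) [Fintype L]

lemma deg_inl [DecidableEq S] (s : S) : Deg L (Crossing σ) (Inc σ) (.inl s) = #{l | σ l = s} := by
  simp only [Deg, Inc]
  congr

lemma deg_inr (e : (interStripGraph σ).edgeSet) : Deg L (Crossing σ) (Inc σ) (.inr e) = 2 := by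
  rw [← Sym2.card_toFinset_of_not_isDiag _ (SimpleGraph.not_isDiag_of_mem_edgeSet _ e.2)]
  unfold Deg
  congr 1
  ext
  rw [Finset.mem_filter, Sym2.mem_toFinset]
  exact and_iff_right (mem_univ _)

variable {σ}

lemma two_le_deg [DecidableEq S] (hσ : ∀ s, 2 ≤ #{l | σ l = s}) (c : Crossing σ) :
    2 ≤ Deg L (Crossing σ) (Inc σ) c := by
  rcases c with s | e
  · exact (deg_inl σ s).symm ▸ hσ s
  · exact (deg_inr σ e).ge

lemma isOrdinaryPair_of_ne {l₁ l₂ : L} (h : σ l₁ ≠ σ l₂) : IsOrdinaryPair (Inc σ) l₁ l₂ :=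
  ⟨ne_of_apply_ne σ h, .inr ⟨s(l₁, l₂), by simpa using h⟩,
    Sym2.mem_mk_left _ _, Sym2.mem_mk_right _ _, deg_inr σ _⟩

lemma strip_ne_of_isOrdinaryPair [DecidableEq S] (hσ : ∀ s, 3 ≤ #{l | σ l = s}) {l₁ l₂ : L}
    (h : IsOrdinaryPair (Inc σ) l₁ l₂) : σ l₁ ≠ σ l₂ := by
  obtain ⟨hne, c, h₁, h₂, hdeg⟩ := h
  rcases c with s | e
  · have := hσ s
    rw [deg_inl] at hdeg
    omega
  · exact ne_of_inc_inr hne h₁ h₂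

lemma exists_isPseudolineColoring [DecidableEq S] (hσ : ∀ s, 2 ≤ #{l | σ l = s}) :
    ∃ col : L → S × Bool, IsPseudolineColoring (Inc σ) col := by
  choose rep hrep using fun s => card_pos.1 (zero_lt_two.trans_le (hσ s))
  simp only [mem_filter_univ] at hrep
  refine ⟨fun l => (σ l, decide (l = rep (σ l))), ?_⟩
  rintro (s | ⟨e, he⟩)
  · obtain ⟨l, hl, hne⟩ := exists_mem_ne (hσ s) (rep s)
    rw [mem_filter_univ] at hl
    refine ⟨rep s, l, hrep s, hl, ?_⟩
    simp [hrep s, hl, hne]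
  · induction e using Sym2.ind with
    | h a b =>
      exact ⟨a, b, Sym2.mem_mk_left _ _, Sym2.mem_mk_right _ _,
        fun h => (interStripGraph_adj σ).1 he (congrArg Prod.fst h)⟩

variable [Fintype S] {K : Type} [Fintype K]

lemma card_le_of_forall_isOrdinaryPair (hσ : Function.Surjective σ) {gc : L → K}
    (hgc : ∀ l₁ l₂, IsOrdinaryPair (Inc σ) l₁ l₂ → gc l₁ ≠ gc l₂) :
    Fintype.card S ≤ Fintype.card K := by
  refine Fintype.card_le_of_injective (gc ∘ Function.surjInv hσ) fun s t h => ?_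
  by_contra hst
  refine hgc _ _ (isOrdinaryPair_of_ne ?_) h
  simpa [Function.surjInv_eq hσ] using hst

end StripArrangement

lemma card_filter_modNat_eq {m n : ℕ} (s : Fin n) : #{i : Fin (m * n) | i.modNat = s} = m := by
  have : ({i : Fin (m * n) | i.modNat = s} : Finset _) =
      univ.image fun k : Fin m => finProdFinEquiv (k, s) := by
    ext i
    simp only [mem_filter_univ, mem_image, mem_univ, true_and]
    constructor
    · rintro rfl
      exact ⟨i.divNat, finProdFinEquiv.apply_symm_apply i⟩
    · rintro ⟨k, rfl⟩
      exact congrArg Prod.snd (finProdFinEquiv.symm_apply_apply (k, s))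
  rw [this, card_image_of_injective _ fun a b h => by simpa using finProdFinEquiv.injective h]
  simp

open StripArrangement in
theorem stmt_13_general (r : ℕ) :
    ∃ (C : Type) (_ : Fintype C) (Inc : C → Fin (3 * r) → Prop),
      (∀ l₁ l₂ : Fin (3 * r), l₁ ≠ l₂ → ∃! c : C, Inc c l₁ ∧ Inc c l₂) ∧
      (∀ c : C, 2 ≤ Deg (Fin (3 * r)) C Inc c) ∧
      ∃ kpl kgo : ℕ, kpl = 2 * kgo ∧
        -- kpl is the pseudoline chromatic number
        (∃ col : Fin (3 * r) → Fin kpl,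
          ∀ c : C, ∃ l₁ l₂, Inc c l₁ ∧ Inc c l₂ ∧ col l₁ ≠ col l₂) ∧
        (∀ (m : ℕ) (col : Fin (3 * r) → Fin m),
          (∀ c : C, ∃ l₁ l₂, Inc c l₁ ∧ Inc c l₂ ∧ col l₁ ≠ col l₂) → kpl ≤ m) ∧
        -- kgo is the chromatic number of the ordinary graph
        (∃ gc : Fin (3 * r) → Fin kgo,
          ∀ l₁ l₂ : Fin (3 * r),
            (l₁ ≠ l₂ ∧ ∃ c : C, Inc c l₁ ∧ Inc c l₂ ∧ Deg (Fin (3 * r)) C Inc c = 2) →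
            gc l₁ ≠ gc l₂) ∧
        (∀ (m : ℕ) (gc : Fin (3 * r) → Fin m),
          (∀ l₁ l₂ : Fin (3 * r),
            (l₁ ≠ l₂ ∧ ∃ c : C, Inc c l₁ ∧ Inc c l₂ ∧ Deg (Fin (3 * r)) C Inc c = 2) →
            gc l₁ ≠ gc l₂) → kgo ≤ m) := by
  let σ : Fin (3 * r) → Fin r := Fin.modNat
  have hstrip : ∀ s, 3 ≤ #{l | σ l = s} := fun s => (card_filter_modNat_eq s).ge
  have hstrip' : ∀ s, 2 ≤ #{l | σ l = s} := fun s => (hstrip s).trans' (by norm_num)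
  obtain ⟨col, hcol⟩ := exists_isPseudolineColoring hstrip'
  have hsurj : Function.Surjective σ := fun s =>
    ⟨finProdFinEquiv (0, s), congrArg Prod.snd (finProdFinEquiv.symm_apply_apply (0, s))⟩
  have hcard : Fintype.card (Fin r × Bool) = 2 * r := by simp [mul_comm]
  refine ⟨Crossing σ, inferInstance, Inc σ, fun _ _ => existsUnique_inc,
    two_le_deg hstrip', 2 * r, r, rfl,
    ⟨_, hcol.comp (Fintype.equivFinOfCardEq hcard).injective⟩,
    fun m col hcol => by simpa using two_mul_card_le_of_isPseudolineColoring hcol,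
    ⟨σ, fun l₁ l₂ h => strip_ne_of_isOrdinaryPair hstrip h⟩,
    fun m gc hgc => by simpa using card_le_of_forall_isOrdinaryPair hsurj hgc⟩

/-- For every `r ≥ 1` there is an arrangement on `3r` pseudolines with
`χ_pl(A) = 2 · χ(G_o(A))`. -/
theorem stmt_13 (r : ℕ) (hr : 1 ≤ r) :
    ∃ (C : Type) (_ : Fintype C) (Inc : C → Fin (3 * r) → Prop),
      (∀ l₁ l₂ : Fin (3 * r), l₁ ≠ l₂ → ∃! c : C, Inc c l₁ ∧ Inc c l₂) ∧
      (∀ c : C, 2 ≤ Deg (Fin (3 * r)) C Inc c) ∧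
      ∃ kpl kgo : ℕ, kpl = 2 * kgo ∧
        -- kpl is the pseudoline chromatic number
        (∃ col : Fin (3 * r) → Fin kpl,
          ∀ c : C, ∃ l₁ l₂, Inc c l₁ ∧ Inc c l₂ ∧ col l₁ ≠ col l₂) ∧
        (∀ (m : ℕ) (col : Fin (3 * r) → Fin m),
          (∀ c : C, ∃ l₁ l₂, Inc c l₁ ∧ Inc c l₂ ∧ col l₁ ≠ col l₂) → kpl ≤ m) ∧
        -- kgo is the chromatic number of the ordinary graph
        (∃ gc : Fin (3 * r) → Fin kgo,
          ∀ l₁ l₂ : Fin (3 * r),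
            (l₁ ≠ l₂ ∧ ∃ c : C, Inc c l₁ ∧ Inc c l₂ ∧ Deg (Fin (3 * r)) C Inc c = 2) →
            gc l₁ ≠ gc l₂) ∧
        (∀ (m : ℕ) (gc : Fin (3 * r) → Fin m),
          (∀ l₁ l₂ : Fin (3 * r),
            (l₁ ≠ l₂ ∧ ∃ c : C, Inc c l₁ ∧ Inc c l₂ ∧ Deg (Fin (3 * r)) C Inc c = 2) →
            gc l₁ ≠ gc l₂) → kgo ≤ m) :=
  stmt_13_general r
end

section
/- Suppose for every $n' \le n$, any arrangement in which all crossings have degree at most $\sqrt{n'}$ admits a coloring with $C\sqrt{n'}$ colors avoiding monochromatic crossings of degree at least 4 (for some absolute constant $C$). Then every arrangement of $n$ pseudolines admits such a coloring with at most $C\sqrt{n} + 2\sqrt{n}$ colors: iteratively remove bundles of more than $\sqrt{n}$ pseudolines through a high-degree crossing (at most $\sqrt{n}$ iterations), color the remainder, and reinsert each bundle using 2 fresh colors per bundle. -/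
open Finset
open scoped Classical

/-!
While some crossing `c` carries more than `√n` of the remaining pseudolines, remove that bundle;
since each bundle has more than `√n` lines, two fresh colours per bundle cost at most
`2 · n / √n = 2√n` colours in total. Two crossings share at most one pseudoline, so any crossing
other than `c` of degree at least 4 that meets the bundle also contains a line coloured earlier,
hence is not monochromatic. Once all crossings have degree at most `√n` among the remaining lines,
padding them with dummy pseudolines in general position yields an arrangement of exactly `n`
pseudolines to which the hypothesis applies.
-/

def IsArrangement {L C : Type} (Inc : C → L → Prop) : Prop :=
  ∀ l₁ l₂ : L, l₁ ≠ l₂ → ∃! c : C, Inc c l₁ ∧ Inc c l₂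

def LowDegreeColorable (K : ℝ) (n : ℕ) : Prop :=
  ∀ (L' C' : Type) (iL' : Fintype L') (_ : Fintype C') (Inc' : C' → L' → Prop),
    @Fintype.card L' iL' = n → IsArrangement Inc' →
    (∀ c : C', (@Deg L' C' iL' Inc' c : ℝ) ≤ √n) →
    ∃ (k' : ℕ) (col : L' → Fin k'), (k' : ℝ) ≤ K * √n ∧
      ∀ c : C', 4 ≤ @Deg L' C' iL' Inc' c →
        ∃ l₁ l₂, Inc' c l₁ ∧ Inc' c l₂ ∧ col l₁ ≠ col l₂

def NoMonochromaticCrossing {L C : Type} (Inc : C → L → Prop) (S : Finset L) (col : L → ℕ) :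
    Prop :=
  ∀ c, 4 ≤ #(S.filter (Inc c)) → ∃ l₁ ∈ S, ∃ l₂ ∈ S, Inc c l₁ ∧ Inc c l₂ ∧ col l₁ ≠ col l₂

theorem two_le_sqrt_of_four_le {n : ℕ} (hn : 4 ≤ n) : (2 : ℝ) ≤ √n :=
  Real.le_sqrt_of_sq_le (by norm_num; exact_mod_cast hn)

theorem one_le_of_lowDegreeColorable_one {K : ℝ} (hK : LowDegreeColorable K 1) : 1 ≤ K := by
  obtain ⟨k, col, hk, -⟩ := hK Unit Empty inferInstance inferInstance (fun _ _ => False) rfl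
    (fun a b h => (h (Subsingleton.elim a b)).elim) (fun c => c.elim)
  have : (1 : ℝ) ≤ k := by exact_mod_cast Fin.pos (col ())
  simpa using this.trans hk

section Restriction

variable {L C : Type} {Inc : C → L → Prop}

theorem deg_le_card [Fintype L] (c : C) : Deg L C Inc c ≤ Fintype.card L :=
  card_filter_le _ _

theorem IsArrangement.eq_of_inc (hA : IsArrangement Inc) {c c' : C} (hc : c ≠ c') {l₁ l₂ : L}
    (h₁ : Inc c l₁) (h₂ : Inc c l₂) (h₁' : Inc c' l₁) (h₂' : Inc c' l₂) : l₁ = l₂ := by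
  by_contra hne
  exact hc ((hA l₁ l₂ hne).unique ⟨h₁, h₂⟩ ⟨h₁', h₂'⟩)

theorem IsArrangement.restrict (hA : IsArrangement Inc) (S : Finset L) :
    IsArrangement fun c (x : S) => Inc c x :=
  fun _ _ h => hA _ _ (Subtype.coe_injective.ne h)

theorem deg_restrict (S : Finset L) (c : C) :
    Deg S C (fun c x => Inc c x) c = #(S.filter (Inc c)) := by
  rw [Deg, ← card_map (Function.Embedding.subtype _)]
  congr 1
  ext l
  simp [and_comm]

end Restriction

section Padding

variable {L M C : Type} {Inc : C → L → Prop}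

/-- Adds dummy pseudolines `M` in general position: each pair of lines involving a dummy gets a
crossing of its own. -/
def padInc (Inc : C → L → Prop) (M : Type) : C ⊕ Sym2 (L ⊕ M) → L ⊕ M → Prop
  | .inl c, .inl x => Inc c x
  | .inl _, .inr _ => False
  | .inr s, l => l ∈ s ∧ ¬s.IsDiag ∧ ∃ d, .inr d ∈ s

@[simp] theorem padInc_inl_inl {c : C} {x : L} : padInc Inc M (.inl c) (.inl x) ↔ Inc c x := .rfl

@[simp] theorem not_padInc_inl_inr {c : C} {d : M} : ¬padInc Inc M (.inl c) (.inr d) := id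

theorem padInc_inl_iff {c : C} {l : L ⊕ M} :
    padInc Inc M (.inl c) l ↔ ∃ x, l = .inl x ∧ Inc c x := by
  cases l <;> simp

theorem IsArrangement.padInc (hA : IsArrangement Inc) : IsArrangement (padInc Inc M) := by
  intro l₁ l₂ hne
  have hpair : ∀ s : Sym2 (L ⊕ M), l₁ ∈ s ∧ l₂ ∈ s ↔ s = s(l₁, l₂) := fun _ =>
    Sym2.mem_and_mem_iff hne
  by_cases hd : ∃ d : M, .inr d ∈ s(l₁, l₂)
  · have hnd : ¬s(l₁, l₂).IsDiag := Sym2.mk_isDiag_iff.not.mpr hne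
    refine ⟨.inr s(l₁, l₂), ⟨⟨Sym2.mem_mk_left _ _, hnd, hd⟩, ⟨Sym2.mem_mk_right _ _, hnd, hd⟩⟩, ?_⟩
    rintro (c | s) ⟨h₁, h₂⟩
    · obtain ⟨d, hd⟩ := hd
      rcases Sym2.mem_iff.mp hd with rfl | rfl
      exacts [absurd h₁ not_padInc_inl_inr, absurd h₂ not_padInc_inl_inr]
    · exact congrArg _ ((hpair s).mp ⟨h₁.1, h₂.1⟩)
  · obtain ⟨x₁, rfl⟩ : ∃ x₁, l₁ = .inl x₁ := by cases l₁ <;> simp_all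
    obtain ⟨x₂, rfl⟩ : ∃ x₂, l₂ = .inl x₂ := by cases l₂ <;> simp_all
    obtain ⟨c, hc, huniq⟩ := hA x₁ x₂ (Sum.inl_injective.ne_iff.mp hne)
    refine ⟨.inl c, hc, ?_⟩
    rintro (c' | s) ⟨h₁, h₂⟩
    · exact congrArg _ (huniq c' ⟨h₁, h₂⟩)
    · obtain rfl := (hpair s).mp ⟨h₁.1, h₂.1⟩
      exact absurd h₁.2.2 hd

theorem deg_padInc_inl [Fintype L] [Fintype M] (c : C) :
    Deg (L ⊕ M) _ (padInc Inc M) (.inl c) = Deg L C Inc c := by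
  rw [Deg, Deg, ← card_map (Function.Embedding.inl : L ↪ L ⊕ M)]
  congr 1
  ext (x | d) <;> simp

theorem deg_padInc_inr_le_two [Fintype L] [Fintype M] (s : Sym2 (L ⊕ M)) :
    Deg (L ⊕ M) _ (padInc Inc M) (.inr s) ≤ 2 := by
  induction s with | h a b => ?_
  calc Deg (L ⊕ M) _ (padInc Inc M) (.inr s(a, b)) ≤ #{a, b} :=
        card_le_card fun l hl => by simpa using (mem_filter.mp hl).2.1
    _ ≤ 2 := card_le_two

end Padding

section Bundles

variable {L C : Type} {Inc : C → L → Prop}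

noncomputable def bundleColoring (Inc : C → L → Prop) (c : C) (l₀ : L) (k : ℕ) (col : L → ℕ) :
    L → ℕ :=
  fun l => if Inc c l then (if l = l₀ then k + 1 else k) else col l

theorem bundleColoring_lt {S : Finset L} {c : C} {l₀ : L} {k : ℕ} {col : L → ℕ}
    (hcol : ∀ l ∈ S.filter (¬Inc c ·), col l < k) :
    ∀ l ∈ S, bundleColoring Inc c l₀ k col l < k + 2 := by
  intro l hl
  unfold bundleColoring
  split_ifs with h
  · omega
  · omega
  · have := hcol l (mem_filter.mpr ⟨hl, h⟩)
    omega

theorem NoMonochromaticCrossing.bundleColoring (hA : IsArrangement Inc) {S : Finset L} {c : C}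
    {l₀ : L} {k : ℕ} {col : L → ℕ} (hcol : ∀ l ∈ S.filter (¬Inc c ·), col l < k)
    (hgood : NoMonochromaticCrossing Inc (S.filter (¬Inc c ·)) col)
    (hl₀ : l₀ ∈ S.filter (Inc c)) :
    NoMonochromaticCrossing Inc S (bundleColoring Inc c l₀ k col) := by
  intro c' hc'
  unfold _root_.bundleColoring
  by_cases hcc : c' = c
  · subst hcc
    obtain ⟨l₁, hl₁, hne⟩ := exists_mem_ne (by omega : 1 < #(S.filter (Inc c'))) l₀
    rw [mem_filter] at hl₀ hl₁
    exact ⟨l₁, hl₁.1, l₀, hl₀.1, hl₁.2, hl₀.2, by simp [hl₁.2, hl₀.2, hne]⟩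
  by_cases hmeet : ∃ lb ∈ S, Inc c lb ∧ Inc c' lb
  · obtain ⟨lb, hlbS, hlb, hlb'⟩ := hmeet
    obtain ⟨l₂, hl₂, hne⟩ := exists_mem_ne (by omega : 1 < #(S.filter (Inc c'))) lb
    rw [mem_filter] at hl₂
    have hl₂c : ¬Inc c l₂ := fun h => hne (hA.eq_of_inc (Ne.symm hcc) h hlb hl₂.2 hlb')
    have := hcol l₂ (mem_filter.mpr ⟨hl₂.1, hl₂c⟩)
    refine ⟨lb, hlbS, l₂, hl₂.1, hlb', hl₂.2, ?_⟩
    simp only [hlb, hl₂c, if_true, if_false]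
    split_ifs <;> omega
  · push Not at hmeet
    have hsub : S.filter (Inc c') ⊆ (S.filter (¬Inc c ·)).filter (Inc c') := fun l hl => by
      simp only [mem_filter] at hl ⊢
      exact ⟨⟨hl.1, fun h => hmeet l hl.1 h hl.2⟩, hl.2⟩
    obtain ⟨l₁, hl₁, l₂, hl₂, h₁, h₂, hne⟩ := hgood c' (hc'.trans (card_le_card hsub))
    rw [mem_filter] at hl₁ hl₂
    exact ⟨l₁, hl₁.1, l₂, hl₂.1, h₁, h₂, by simpa [hl₁.2, hl₂.2] using hne⟩

end Bundles

section Coloring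

variable {L C : Type} [Fintype C] {Inc : C → L → Prop} {K : ℝ} {n : ℕ}

theorem exists_coloring_of_deg_le (hA : IsArrangement Inc) (hn : 4 ≤ n)
    (hK : LowDegreeColorable K n) (S : Finset L) (hS : #S ≤ n)
    (hdeg : ∀ c, (#(S.filter (Inc c)) : ℝ) ≤ √n) :
    ∃ (k : ℕ) (col : L → ℕ), (∀ l ∈ S, col l < k) ∧ (k : ℝ) ≤ K * √n ∧
      NoMonochromaticCrossing Inc S col := by
  let Inc' := padInc (fun c (x : S) => Inc c x) (Fin (n - #S))
  have hcard : Fintype.card (S ⊕ Fin (n - #S)) = n := by simp; omega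
  have hdeg' : ∀ c', (Deg _ _ Inc' c' : ℝ) ≤ √n := by
    rintro (c | s)
    · rw [deg_padInc_inl, deg_restrict]
      exact hdeg c
    · exact (Nat.cast_le.mpr (deg_padInc_inr_le_two s)).trans
        (by exact_mod_cast two_le_sqrt_of_four_le hn)
  obtain ⟨k, col, hk, hgood⟩ := hK _ _ inferInstance inferInstance Inc' hcard
    (hA.restrict S).padInc hdeg'
  refine ⟨k, fun l => if h : l ∈ S then col (.inl ⟨l, h⟩) else 0, fun l hl => by simp [hl], hk, ?_⟩
  intro c hc
  obtain ⟨l₁, l₂, h₁, h₂, hne⟩ := hgood (.inl c) (by rwa [deg_padInc_inl, deg_restrict])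
  obtain ⟨x₁, rfl, h₁⟩ := padInc_inl_iff.mp h₁
  obtain ⟨x₂, rfl, h₂⟩ := padInc_inl_iff.mp h₂
  exact ⟨x₁, x₁.2, x₂, x₂.2, h₁, h₂, by simpa [Fin.val_inj] using hne⟩

theorem exists_coloring_on (hA : IsArrangement Inc) (hn : 4 ≤ n) (hK : LowDegreeColorable K n)
    (S : Finset L) (hS : #S ≤ n) :
    ∃ (k : ℕ) (col : L → ℕ), (∀ l ∈ S, col l < k) ∧ (k : ℝ) ≤ K * √n + 2 * #S / √n ∧
      NoMonochromaticCrossing Inc S col := by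
  induction S using Finset.strongInduction with | H S ih => ?_
  by_cases hhigh : ∃ c, √n < #(S.filter (Inc c))
  · obtain ⟨c, hc⟩ := hhigh
    obtain ⟨l₀, hl₀⟩ : (S.filter (Inc c)).Nonempty :=
      card_pos.mp (by exact_mod_cast (by positivity : (0 : ℝ) < √n).trans hc)
    have hrest : S.filter (¬Inc c ·) ⊂ S :=
      filter_ssubset.mpr ⟨l₀, (mem_filter.mp hl₀).1, not_not.mpr (mem_filter.mp hl₀).2⟩
    obtain ⟨k, col, hcol, hk, hgood⟩ := ih _ hrest ((card_filter_le _ _).trans hS)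
    refine ⟨k + 2, bundleColoring Inc c l₀ k col, bundleColoring_lt hcol, ?_,
      hgood.bundleColoring hA hcol hl₀⟩
    have hfresh : (2 : ℝ) ≤ 2 * #(S.filter (Inc c)) / √n := by
      rw [le_div_iff₀ (by positivity)]
      linarith
    have hsplit : (2 * #S / √n : ℝ) =
        2 * #(S.filter (¬Inc c ·)) / √n + 2 * #(S.filter (Inc c)) / √n := by
      rw [← card_filter_add_card_filter_not (s := S) (Inc c)]
      push_cast
      ring
    push_cast
    linarith
  · push Not at hhigh
    obtain ⟨k, col, hcol, hk, hgood⟩ := exists_coloring_of_deg_le hA hn hK S hS hhigh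
    exact ⟨k, col, hcol, hk.trans (le_add_of_nonneg_right (by positivity)), hgood⟩

end Coloring

/-- Reduction: if every arrangement on at most `n` pseudolines whose crossings all have degree
at most `√n'` can be colored with `C·√n'` colors avoiding monochromatic crossings of degree at
least 4, then every arrangement of `n` pseudolines admits such a coloring with at most
`C·√n + 2·√n` colors. -/
theorem stmt_19 (Cconst : ℝ) (n : ℕ) (L C : Type) [Fintype L] [Fintype C]
    (Inc : C → L → Prop) (hn : Fintype.card L = n)
    (hpair : ∀ l₁ l₂ : L, l₁ ≠ l₂ → ∃! c : C, Inc c l₁ ∧ Inc c l₂)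
    (ih : ∀ n' : ℕ, n' ≤ n →
      ∀ (L' C' : Type) (iL' : Fintype L') (iC' : Fintype C') (Inc' : C' → L' → Prop),
        @Fintype.card L' iL' = n' →
        (∀ l₁ l₂ : L', l₁ ≠ l₂ → ∃! c : C', Inc' c l₁ ∧ Inc' c l₂) →
        (∀ c : C', (@Deg L' C' iL' Inc' c : ℝ) ≤ Real.sqrt n') →
        ∃ (k' : ℕ) (col : L' → Fin k'), (k' : ℝ) ≤ Cconst * Real.sqrt n' ∧
          ∀ c : C', 4 ≤ @Deg L' C' iL' Inc' c →
            ∃ l₁ l₂, Inc' c l₁ ∧ Inc' c l₂ ∧ col l₁ ≠ col l₂) :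
    ∃ (kc : ℕ) (col : L → Fin kc), (kc : ℝ) ≤ Cconst * Real.sqrt n + 2 * Real.sqrt n ∧
      ∀ c : C, 4 ≤ Deg L C Inc c →
        ∃ l₁ l₂, Inc c l₁ ∧ Inc c l₂ ∧ col l₁ ≠ col l₂ := by
  obtain hsmall | hn4 := Nat.lt_or_ge n 4
  · have hdeg : ∀ c, ¬4 ≤ Deg L C Inc c := fun c h => by
      have := deg_le_card (Inc := Inc) c
      omega
    obtain rfl | hpos := n.eq_zero_or_pos
    · have : IsEmpty L := Fintype.card_eq_zero_iff.mp hn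
      exact ⟨0, isEmptyElim, by simp, fun c h => (hdeg c h).elim⟩
    -- One colour suffices; the hypothesis for a single pseudoline forces `1 ≤ Cconst`.
    · have hK := one_le_of_lowDegreeColorable_one (ih 1 hpos)
      have h1 : (1 : ℝ) ≤ √n := Real.one_le_sqrt.mpr (by exact_mod_cast hpos)
      exact ⟨1, fun _ => 0, by push_cast; nlinarith, fun c h => (hdeg c h).elim⟩
  · obtain ⟨k, col, hcol, hk, hgood⟩ :=
      exists_coloring_on hpair hn4 (ih n le_rfl) univ (by simp [hn])
    refine ⟨k, fun l => ⟨col l, hcol l (mem_univ l)⟩, ?_, fun c hc => ?_⟩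
    · rwa [card_univ, hn, mul_div_assoc, Real.div_sqrt] at hk
    · obtain ⟨l₁, -, l₂, -, h₁, h₂, hne⟩ := hgood c hc
      exact ⟨l₁, l₂, h₁, h₂, by simpa [Fin.ext_iff] using hne⟩
end
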